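/- For every m ∈ {0, 1, …, n} and every i ∈ {1, 2, 3, 4}, the binomial b_{im}^{2^(2^m)} c_{im} f_m + c_{im} s_m belongs to the ideal ⟨P⟩ of Z2[X]. -/

import Mathlib

open MvPolynomial

/-- Monomials in the variables `σ`, represented by their exponent vectors. -/
abbrev Mon (σ : Type*) := σ →₀ ℕ

/-- A monomial order: a total order on monomials such that `1 ≼ t` for every monomial `t`
and `t ≼ u → t·v ≼ u·v` (written additively on exponent vectors). -/
structure MonOrd (σ : Type*) where
  le : Mon σ → Mon σ → Prop
  le_refl : ∀ t, le t t
  le_trans : ∀ t u v, le t u → le u v → le t v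
  le_antisymm : ∀ t u, le t u → le u t → t = u
  le_total : ∀ t u, le t u ∨ le u t
  zero_le : ∀ t, le 0 t
  add_le_add : ∀ t u v, le t u → le (t + v) (u + v)

/-- Strict version of a monomial order. -/
def MonOrd.lt {σ : Type*} (μ : MonOrd σ) (t u : Mon σ) : Prop := μ.le t u ∧ t ≠ u

/-- The extension of a monomial order (given by the relation `r` on monomials) to polynomials:
`g ≼ f` iff `g = f` or the greatest monomial on which `f` and `g` differ occurs in `f`.
(This is the closed form of the recursive definition: `g ≼ f` iff `g = f`, or
`HT g ≺ HT f`, or `HT g = HT f` and `g - HT g ≼ f - HT f`, with `0` the least polynomial.) -/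
def polyLe {σ : Type*} (r : Mon σ → Mon σ → Prop) (g f : MvPolynomial σ (ZMod 2)) : Prop :=
  g = f ∨ ∃ t, t ∈ f.support ∧ t ∉ g.support ∧
    ∀ u : Mon σ, ((u ∈ f.support ∧ u ∉ g.support) ∨ (u ∈ g.support ∧ u ∉ f.support)) → r u t

/-- Strict extension of a monomial order to polynomials. -/
def polyLt {σ : Type*} (r : Mon σ → Mon σ → Prop) (g f : MvPolynomial σ (ZMod 2)) : Prop :=
  polyLe r g f ∧ g ≠ f

/-- `S_F`: the set of non-residual polynomials with respect to `F` and the monomial order `r`,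
i.e. those `f` admitting a `g` with `f + g ∈ ⟨F⟩` and `g ≺ f`. -/
def SF {σ : Type*} (r : Mon σ → Mon σ → Prop) (F : Set (MvPolynomial σ (ZMod 2))) :
    Set (MvPolynomial σ (ZMod 2)) :=
  {f | ∃ g, f + g ∈ Ideal.span F ∧ polyLt r g f}

/-- `t` is the head monomial (`r`-greatest monomial) of the polynomial `f`. -/
def IsHT {σ : Type*} (r : Mon σ → Mon σ → Prop) (f : MvPolynomial σ (ZMod 2)) (t : Mon σ) :
    Prop :=
  t ∈ f.support ∧ ∀ u ∈ f.support, r u t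

/-- `HT(S)`: the set of head monomials (as polynomials) of the nonzero elements of `S`. -/
def HTset {σ : Type*} (r : Mon σ → Mon σ → Prop) (S : Set (MvPolynomial σ (ZMod 2))) :
    Set (MvPolynomial σ (ZMod 2)) :=
  {p | ∃ f ∈ S, f ≠ 0 ∧ ∃ t, IsHT r f t ∧ p = monomial t 1}

/-- The divisibility (componentwise) order `◁` on monomials. -/
def triMon {σ : Type*} (t u : Mon σ) : Prop := ∀ x, t x ≤ u x

/-- The order `◁` on polynomials: `p ◁ q` iff there is an injective map `φ` from the
monomials of `p` to the monomials of `q` with `t ◁ φ t` for each monomial `t` of `p`. -/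
def triPoly {σ : Type*} (p q : MvPolynomial σ (ZMod 2)) : Prop :=
  ∃ φ : Mon σ → Mon σ, Set.InjOn φ ↑p.support ∧ ∀ t ∈ p.support, φ t ∈ q.support ∧ triMon t (φ t)

/-- Upward closure with respect to `◁`. -/
def upClo {σ : Type*} (A : Set (MvPolynomial σ (ZMod 2))) : Set (MvPolynomial σ (ZMod 2)) :=
  {q | ∃ p ∈ A, triPoly p q}

/-- `Min_◁(A)`: the `◁`-minimal elements of `A`. -/
def minTri {σ : Type*} (A : Set (MvPolynomial σ (ZMod 2))) : Set (MvPolynomial σ (ZMod 2)) :=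
  {p | p ∈ A ∧ ∀ q ∈ A, triPoly q p → q = p}

/-- `G` is a Gröbner basis of the ideal `I` with respect to the monomial order `r`. -/
def IsGB {σ : Type*} (r : Mon σ → Mon σ → Prop) (G : Finset (MvPolynomial σ (ZMod 2)))
    (I : Ideal (MvPolynomial σ (ZMod 2))) : Prop :=
  (↑G : Set (MvPolynomial σ (ZMod 2))) ⊆ ↑I ∧
    Ideal.span (↑G : Set (MvPolynomial σ (ZMod 2))) = I ∧
    Ideal.span (HTset r (↑I : Set (MvPolynomial σ (ZMod 2)))) = Ideal.span (HTset r ↑G)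

/-- `G` is a reduced Gröbner basis of `I` with respect to `r`. -/
def IsReducedGB {σ : Type*} (r : Mon σ → Mon σ → Prop) (G : Finset (MvPolynomial σ (ZMod 2)))
    (I : Ideal (MvPolynomial σ (ZMod 2))) : Prop :=
  IsGB r G I ∧ ∀ f ∈ G, ¬ ∀ t ∈ f.support,
    (monomial t 1 : MvPolynomial σ (ZMod 2)) ∈
      Ideal.span (HTset r ((↑G : Set (MvPolynomial σ (ZMod 2))) \ {f}))

/-- The variable set `X`: the special variables `s, ℓ, c, c̄, b, b̄` together with, for each
`0 ≤ i ≤ n`, the variables `s_i, f_i, q_{ji}, c_{ji}, b_{ji}` (`1 ≤ j ≤ 4`, encoded by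
`j : Fin 4`) and their barred copies (`bar = true`). -/
inductive MVar (n : ℕ) : Type where
  | vs | vl | vc | vcb | vb | vbb
  | vS (bar : Bool) (i : Fin (n+1))
  | vF (bar : Bool) (i : Fin (n+1))
  | vQ (bar : Bool) (j : Fin 4) (i : Fin (n+1))
  | vC (bar : Bool) (j : Fin 4) (i : Fin (n+1))
  | vB (bar : Bool) (j : Fin 4) (i : Fin (n+1))
deriving DecidableEq

open MVar

abbrev MPoly (n : ℕ) := MvPolynomial (MVar n) (ZMod 2)

/-- `e(n) = 2^(2^n)`. -/
def en (n : ℕ) : ℕ := 2 ^ 2 ^ n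

/-- The set `P_0` (barred copy if `bar = true`). -/
def P0 (n : ℕ) (bar : Bool) : Set (MPoly n) :=
  {p | ∃ j : Fin 4, p =
    X (vB bar j 0) ^ 2 * X (vC bar j 0) * X (vF bar 0) + X (vC bar j 0) * X (vS bar 0)}

/-- The set `P_m` for `m = i+1`, `i : Fin n` (barred copy if `bar = true`).
Here `i.succ` plays the role of `m` and `i.castSucc` the role of `m-1`; the indices
`1,2,3,4` of the paper are encoded as `0,1,2,3 : Fin 4`. -/
def Pm (n : ℕ) (bar : Bool) (i : Fin n) : Set (MPoly n) :=
  ({ X (vQ bar 0 i.succ) * X (vC bar 0 i.castSucc) * X (vS bar i.castSucc) + X (vS bar i.succ),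
    X (vQ bar 1 i.succ) * X (vC bar 1 i.castSucc) * X (vS bar i.castSucc)
      + X (vQ bar 0 i.succ) * X (vB bar 0 i.castSucc) * X (vC bar 0 i.castSucc)
        * X (vF bar i.castSucc),
    X (vQ bar 2 i.succ) * X (vC bar 2 i.castSucc) * X (vF bar i.castSucc)
      + X (vQ bar 1 i.succ) * X (vC bar 1 i.castSucc) * X (vF bar i.castSucc),
    X (vQ bar 2 i.succ) * X (vB bar 0 i.castSucc) * X (vC bar 2 i.castSucc)
        * X (vS bar i.castSucc)
      + X (vQ bar 1 i.succ) * X (vB bar 3 i.castSucc) * X (vC bar 1 i.castSucc)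
        * X (vS bar i.castSucc),
    X (vQ bar 3 i.succ) * X (vB bar 3 i.castSucc) * X (vC bar 3 i.castSucc)
        * X (vF bar i.castSucc)
      + X (vQ bar 2 i.succ) * X (vC bar 2 i.castSucc) * X (vS bar i.castSucc),
    X (vQ bar 3 i.succ) * X (vC bar 3 i.castSucc) * X (vS bar i.castSucc)
      + X (vF bar i.succ) } : Set (MPoly n))
  ∪ {p | ∃ j : Fin 4, p =
      X (vQ bar 1 i.succ) * X (vB bar 2 i.castSucc) * X (vB bar j i.succ) * X (vC bar j i.succ)
          * X (vF bar i.castSucc)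
        + X (vQ bar 1 i.succ) * X (vB bar 1 i.castSucc) * X (vC bar j i.succ)
          * X (vF bar i.castSucc)}

/-- The set `P = P_0 ∪ P_1 ∪ ⋯ ∪ P_n`; for `bar = true` this is the barred copy `P̄`
(the image of `P` under the substitution replacing each variable by its barred version). -/
def PP (n : ℕ) (bar : Bool) : Set (MPoly n) := P0 n bar ∪ ⋃ i : Fin n, Pm n bar i

/-- The set `G` of seven extra binomials. -/
def GG (n : ℕ) : Set (MPoly n) :=
  { X (vB false 3 (Fin.last n)) * X vl * X vb + X vl * X vc,
    X (vB false 3 (Fin.last n)) * X vl * X vbb + X vl * X vcb,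
    X (vC false 3 (Fin.last n)) * X (vF false (Fin.last n)) + X vl,
    X (vC true 3 (Fin.last n)) * X (vF true (Fin.last n))
      + X (vC false 3 (Fin.last n)) * X (vS false (Fin.last n)),
    X (vB true 3 (Fin.last n)) * X (vC false 3 (Fin.last n)) * X (vS false (Fin.last n))
      + X (vC false 3 (Fin.last n)) * X (vS false (Fin.last n)) * X vb,
    X (vB true 3 (Fin.last n)) * X (vC false 3 (Fin.last n)) * X (vS false (Fin.last n))
      + X (vC false 3 (Fin.last n)) * X (vS false (Fin.last n)) * X vbb,
    X (vC true 3 (Fin.last n)) * X (vS true (Fin.last n)) + X vs }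

/-- The set `𝓕 = P ∪ P̄ ∪ G`. -/
def FF (n : ℕ) : Set (MPoly n) := PP n false ∪ PP n true ∪ GG n

/-- The set `C = {ℓ c̄^{m1} c^{m2} : m1 + m2 = e(n)}` of monomials. -/
def Cmon (n : ℕ) : Set (Mon (MVar n)) :=
  {α | ∃ m1 m2 : ℕ, m1 + m2 = en n ∧
    α = Finsupp.single vl 1 + Finsupp.single vcb m1 + Finsupp.single vc m2}

/-- The set `D = {ℓ^j c̄^{m1} c^{m2} : j ∈ {0,1}, j + m1 + m2 ≤ e(n)}` of monomials. -/
def Dmon (n : ℕ) : Set (Mon (MVar n)) :=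
  {α | ∃ j m1 m2 : ℕ, j ≤ 1 ∧ j + m1 + m2 ≤ en n ∧
    α = Finsupp.single vl j + Finsupp.single vcb m1 + Finsupp.single vc m2}

/-- An injective rank function on the variables realizing the variable ordering
(from least to greatest): `s, c, c̄, ℓ, b, b̄`; then `s_0,…,s_n`; `f_0,…,f_n`;
`c_{10},…,c_{1n}; …; c_{40},…,c_{4n}`; `b_{10},…,b_{4n}`; `q_{10},…,q_{4n}`;
then the barred variables in the same pattern. -/
def vrank (n : ℕ) : MVar n → ℕ
  | .vs => 0
  | .vc => 1
  | .vcb => 2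
  | .vl => 3
  | .vb => 4
  | .vbb => 5
  | .vS bar i => 6 + (cond bar (14 * (n+1)) 0) + (i : ℕ)
  | .vF bar i => 6 + (cond bar (14 * (n+1)) 0) + (n+1) + (i : ℕ)
  | .vC bar j i => 6 + (cond bar (14 * (n+1)) 0) + 2*(n+1) + (j : ℕ)*(n+1) + (i : ℕ)
  | .vB bar j i => 6 + (cond bar (14 * (n+1)) 0) + 6*(n+1) + (j : ℕ)*(n+1) + (i : ℕ)
  | .vQ bar j i => 6 + (cond bar (14 * (n+1)) 0) + 10*(n+1) + (j : ℕ)*(n+1) + (i : ℕ)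

/-- The lexicographic monomial order on `X`: `t ≼_lex u` iff `t = u` or the exponents differ
somewhere and at the greatest variable (w.r.t. `vrank`) where they differ, the exponent of
`t` is smaller. -/
def lexLe (n : ℕ) (t u : Mon (MVar n)) : Prop :=
  t = u ∨ ∃ x : MVar n, t x < u x ∧ ∀ y : MVar n, vrank n x < vrank n y → t y = u y

/-- The total degree of a monomial. -/
def mdeg {σ : Type*} (t : Mon σ) : ℕ := t.sum fun _ k => k

/-- The degree lexicographic monomial order. -/
def degLexLe (n : ℕ) (t u : Mon (MVar n)) : Prop :=
  mdeg t < mdeg u ∨ (mdeg t = mdeg u ∧ lexLe n t u)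

/-- Weighted degree of a monomial with respect to a weight map `w`. -/
noncomputable def wdeg {n : ℕ} (w : MVar n → ℝ) (t : Mon (MVar n)) : ℝ :=
  t.sum fun x k => (k : ℝ) * w x

/-- The weighted monomial order determined by the weight map `w`. -/
def wLe {n : ℕ} (w : MVar n → ℝ) (t u : Mon (MVar n)) : Prop := t = u ∨ wdeg w t < wdeg w u

/-!
Induction on `m`. Modulo `⟨P⟩` every generator is an identity between two monomials, so
the argument takes place in an arbitrary commutative monoid. Put `E = e(m-1)`,
`y = c_{jm} q_{3m} c_{3(m-1)} s_{m-1}` and `b = b_{jm}`. Combining the generators of `P_m` with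
the induction hypotheses shows that on `y`, multiplication by `b_{1(m-1)}` acts as
multiplication by `b^E b_{4(m-1)}`. The identity `c_{jm} s_m = b^{E²} c_{jm} f_m` comes from
doing this `E - 1` times, and `E² = e(m)`.
-/

theorem pow_mul_eq_pow_mul_of_mul_eq {M : Type*} [CommMonoid M] {a b x : M}
    (h : a * x = b * x) (k : ℕ) : a ^ k * x = b ^ k * x := by
  induction k with
  | zero => simp
  | succ k ih =>
    calc a ^ (k + 1) * x = a ^ k * (a * x) := by rw [pow_succ, mul_assoc]
      _ = b * (a ^ k * x) := by rw [h, mul_left_comm]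
      _ = b ^ (k + 1) * x := by rw [ih, pow_succ', mul_assoc]

theorem Ideal.Quotient.mk_eq_mk_iff_add_mem {R : Type*} [CommRing R] [CharP R 2]
    {I : Ideal R} {a b : R} : mk I a = mk I b ↔ a + b ∈ I := by
  rw [mk_eq_mk_iff_sub_mem, CharTwo.sub_eq_add]

theorem pow_sq_mul_eq_of_relations {M : Type*} [CommMonoid M] {E : ℕ} (hE : E ≠ 0)
    {s f s' f' B C : M} {q b c : Fin 4 → M}
    (hb : ∀ k, b k ^ E * c k * f = c k * s)
    (h₁ : q 0 * c 0 * s = s')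
    (h₂ : q 1 * c 1 * s = q 0 * b 0 * c 0 * f)
    (h₃ : q 2 * c 2 * f = q 1 * c 1 * f)
    (h₄ : q 2 * b 0 * c 2 * s = q 1 * b 3 * c 1 * s)
    (h₅ : q 3 * b 3 * c 3 * f = q 2 * c 2 * s)
    (h₆ : q 3 * c 3 * s = f')
    (h₇ : q 1 * b 2 * B * C * f = q 1 * b 1 * C * f) :
    B ^ (E ^ 2) * C * f' = C * s' := by
  have h₇E : (b 2 * B) ^ E * (q 1 * C * f) = b 1 ^ E * (q 1 * C * f) :=
    pow_mul_eq_pow_mul_of_mul_eq (by simpa only [mul_assoc, mul_left_comm] using h₇) E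
  have hA : C * (q 1 * c 1 * s) = B ^ E * (C * (q 2 * c 2 * s)) :=
    calc C * (q 1 * c 1 * s) = q 1 * C * (b 1 ^ E * c 1 * f) := by rw [hb]; ac_rfl
      _ = c 1 * ((b 2 * B) ^ E * (q 1 * C * f)) := by rw [h₇E]; ac_rfl
      _ = B ^ E * C * b 2 ^ E * (q 1 * c 1 * f) := by rw [mul_pow]; ac_rfl
      _ = B ^ E * C * q 2 * (b 2 ^ E * c 2 * f) := by rw [← h₃]; ac_rfl
      _ = B ^ E * (C * (q 2 * c 2 * s)) := by rw [hb]; ac_rfl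
  have hB : b 0 * (C * (q 2 * c 2 * s)) = B ^ E * b 3 * (C * (q 2 * c 2 * s)) :=
    calc b 0 * (C * (q 2 * c 2 * s)) = C * (q 2 * b 0 * c 2 * s) := by ac_rfl
      _ = b 3 * (C * (q 1 * c 1 * s)) := by rw [h₄]; ac_rfl
      _ = B ^ E * b 3 * (C * (q 2 * c 2 * s)) := by rw [hA]; ac_rfl
  calc B ^ (E ^ 2) * C * f'
      = B ^ (E ^ 2) * C * q 3 * (b 3 ^ E * c 3 * f) := by rw [hb, ← h₆]; ac_rfl
    _ = B ^ (E ^ 2) * b 3 ^ (E - 1) * C * (q 3 * b 3 * c 3 * f) := by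
      rw [← pow_sub_one_mul hE (b 3)]; ac_rfl
    _ = B ^ E * ((B ^ E * b 3) ^ (E - 1) * (C * (q 2 * c 2 * s))) := by
      rw [h₅, mul_pow, sq, pow_mul, ← pow_sub_one_mul hE (B ^ E)]; ac_rfl
    _ = B ^ E * (b 0 ^ (E - 1) * (C * (q 2 * c 2 * s))) := by
      rw [pow_mul_eq_pow_mul_of_mul_eq hB]
    _ = b 0 ^ (E - 1) * (C * (q 1 * c 1 * s)) := by rw [hA]; ac_rfl
    _ = C * q 0 * (b 0 ^ (E - 1) * b 0 * c 0 * f) := by rw [h₂]; ac_rfl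
    _ = C * s' := by rw [pow_sub_one_mul hE, hb, ← h₁]; ac_rfl

theorem pow_sq_mul_add_mem_of_relations {R : Type*} [CommRing R] [CharP R 2] {I : Ideal R}
    {E : ℕ} (hE : E ≠ 0) {s f s' f' B C : R} {q b c : Fin 4 → R}
    (hb : ∀ k, b k ^ E * c k * f + c k * s ∈ I)
    (h₁ : q 0 * c 0 * s + s' ∈ I)
    (h₂ : q 1 * c 1 * s + q 0 * b 0 * c 0 * f ∈ I)
    (h₃ : q 2 * c 2 * f + q 1 * c 1 * f ∈ I)
    (h₄ : q 2 * b 0 * c 2 * s + q 1 * b 3 * c 1 * s ∈ I)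
    (h₅ : q 3 * b 3 * c 3 * f + q 2 * c 2 * s ∈ I)
    (h₆ : q 3 * c 3 * s + f' ∈ I)
    (h₇ : q 1 * b 2 * B * C * f + q 1 * b 1 * C * f ∈ I) :
    B ^ (E ^ 2) * C * f' + C * s' ∈ I := by
  simp only [← Ideal.Quotient.mk_eq_mk_iff_add_mem, map_mul, map_pow] at *
  exact pow_sq_mul_eq_of_relations (q := fun k => Ideal.Quotient.mk I (q k))
    (b := fun k => Ideal.Quotient.mk I (b k)) (c := fun k => Ideal.Quotient.mk I (c k))
    hE hb h₁ h₂ h₃ h₄ h₅ h₆ h₇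

theorem Pm_subset_span_PP (n : ℕ) (bar : Bool) (i : Fin n) :
    Pm n bar i ⊆ Ideal.span (PP n bar) :=
  fun _ hp => Ideal.subset_span (Or.inr (Set.mem_iUnion.2 ⟨i, hp⟩))

open MVar in
/-- For every `0 ≤ m ≤ n` and `1 ≤ i ≤ 4` (encoded `j : Fin 4`),
`b_{im}^{2^(2^m)} c_{im} f_m + c_{im} s_m ∈ ⟨P⟩`. -/
theorem stmt6 (n : ℕ) (m : Fin (n+1)) (j : Fin 4) :
    (X (vB false j m) ^ (2 ^ 2 ^ (m : ℕ)) * X (vC false j m) * X (vF false m)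
        + X (vC false j m) * X (vS false m) : MPoly n)
      ∈ Ideal.span (PP n false) := by
  induction m using Fin.induction generalizing j with
  | zero => exact Ideal.subset_span (Or.inl ⟨j, by simp⟩)
  | succ i ih =>
    rw [Fin.val_succ, pow_succ 2 (i : ℕ), pow_mul]
    refine pow_sq_mul_add_mem_of_relations (q := fun k => X (vQ false k i.succ))
      (b := fun k => X (vB false k i.castSucc)) (c := fun k => X (vC false k i.castSucc))
      (by positivity) ih ?_ ?_ ?_ ?_ ?_ ?_ (Pm_subset_span_PP n false i (Or.inr ⟨j, rfl⟩))
    all_goals exact Pm_subset_span_PP n false i (by simp [Pm])
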